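/- arXiv:1401.1905 — 3 statements merged into one kernel-verified Lean document; each statement's English description precedes it below -/
import Mathlib

section
/- For any instance of the generalised minimum spanning tree problem with n nodes and m clusters, the expected optimization time of the cluster-based (1+1) EA (with the spanned nodes representation) is O(n^m). In particular, from any node selection the probability that a single mutation step produces a globally optimal node selection is at least m^{-m} * prod_{i=1}^m |V_i|^{-1} >= n^{-m}, so the expected number of iterations until an optimal solution is reached is at most n^m. -/
open scoped ENNReal BigOperators Classical

noncomputable section

/-- Probability that a (1+1) evolutionary algorithm with initial distribution `μ0` and
one-step transition kernel `K` follows the trajectory prefix `x 0, x 1, …, x t`. -/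
def trajProb {State : Type*} (μ0 : State → ℝ≥0∞) (K : State → State → ℝ≥0∞)
    {t : ℕ} (x : Fin (t + 1) → State) : ℝ≥0∞ :=
  μ0 (x 0) * ∏ i : Fin t, K (x i.castSucc) (x i.succ)

/-- `survival μ0 K Opt t` is the probability `P(T > t)` that no optimal state (w.r.t. the
goal predicate `Opt`) occurs among the first `t+1` states `X 0, …, X t` of the Markov chain
with initial distribution `μ0` and transition kernel `K`; here `T = inf {t | Opt (X t)}`
is the optimization time. -/
def survival {State : Type*} (μ0 : State → ℝ≥0∞) (K : State → State → ℝ≥0∞)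
    (Opt : State → Prop) (t : ℕ) : ℝ≥0∞ :=
  ∑' x : Fin (t + 1) → State, if ∀ i, ¬ Opt (x i) then trajProb μ0 K x else 0

/-- The expected optimization time `E[T] = ∑_{t ≥ 0} P(T > t)` of the Markov chain with
initial distribution `μ0` and transition kernel `K`, where `T = inf {t | Opt (X t)}`. -/
def expectedOptTime {State : Type*} (μ0 : State → ℝ≥0∞) (K : State → State → ℝ≥0∞)
    (Opt : State → Prop) : ℝ≥0∞ :=
  ∑' t : ℕ, survival μ0 K Opt t

/-- The one-step transition kernel of a (1+1) EA: from the current solution `x`, an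
offspring `y` is sampled from the mutation distribution `mutate x`; it is accepted (i.e. the
chain moves to `y`) iff `cost y ≤ cost x`, otherwise the chain stays at `x`. -/
def eaKernel {State : Type*} (mutate : State → State → ℝ≥0∞) (cost : State → ℝ≥0∞)
    (x y : State) : ℝ≥0∞ :=
  (if cost y ≤ cost x then mutate x y else 0) +
    (if y = x then ∑' z : State, (if cost z ≤ cost x then 0 else mutate x z) else 0)

/-- Mutation distribution of the cluster-based (1+1) EA with spanned nodes representation:
independently for each cluster `i`, with probability `1/m` the node chosen in cluster `i`
is replaced by a node drawn uniformly at random from `Vc i` (and is kept unchanged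
otherwise). `clusterMut m Vc x y` is the probability that mutating `x` yields `y`. -/
def clusterMut (m : ℕ) {V : Type*} [DecidableEq V] (Vc : Fin m → Finset V)
    (x y : Fin m → V) : ℝ≥0∞ :=
  ∏ i : Fin m,
    ((if y i ∈ Vc i then (m : ℝ≥0∞)⁻¹ * ((Vc i).card : ℝ≥0∞)⁻¹ else 0) +
      (if y i = x i then 1 - (m : ℝ≥0∞)⁻¹ else 0))

/-- The cost of the minimum spanning tree of the subgraph induced by the node selection
`x : Fin m → V` (one node per cluster), where `c` is the (symmetric, possibly infinite)
edge-cost function: the infimum over all trees `G` on the `m` clusters of the total cost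
of the corresponding edges. -/
def mstCost {m : ℕ} {V : Type*} (c : V → V → ℝ≥0∞) (x : Fin m → V) : ℝ≥0∞ :=
  ⨅ (G : SimpleGraph (Fin m)) (_ : G.IsTree),
    (∑ i : Fin m, ∑ j : Fin m, if G.Adj i j then c (x i) (x j) else 0) / 2

/-!
Fix an optimal selection `y`. From any valid selection `x`, a single mutation produces `y` with
probability at least `p = m⁻ᵐ ∏ |V_i|⁻¹`, since the `i`-th factor of `clusterMut` is at least the
probability `1 / (m |V_i|)` of resampling exactly `y i`. Elitist selection always accepts `y` and
the chain never leaves the valid selections, so the probability that no optimum has been seen by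
step `t` is at most `(1 - p)ᵗ`; summing the geometric series gives `E[T] ≤ 1 / p`. Since the
clusters are disjoint, AM-GM gives `mᵐ ∏ |V_i| ≤ (∑ |V_i|)ᵐ ≤ nᵐ`.
-/

open Finset Function

theorem ENNReal.exists_ne_zero_of_tsum_eq_one {α : Type*} {μ : α → ℝ≥0∞} (h : ∑' x, μ x = 1) :
    ∃ x, μ x ≠ 0 := by
  by_contra! h0
  simp [h0] at h

section MarkovChain

variable {State : Type*} (K : State → State → ℝ≥0∞) (Opt : State → Prop)

theorem trajProb_cons (ν : State → ℝ≥0∞) {t : ℕ} (z : State) (x : Fin (t + 1) → State) :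
    trajProb ν K (Fin.cons z x) = ν z * trajProb (K z) K x := by
  simp only [trajProb, Fin.prod_univ_succ, Fin.cons_zero, Fin.castSucc_zero, Fin.cons_succ,
    ← Fin.succ_castSucc]

theorem survival_zero (ν : State → ℝ≥0∞) :
    survival ν K Opt 0 = ∑' z, if ¬ Opt z then ν z else 0 := by
  rw [survival, ← (Equiv.funUnique (Fin 1) State).symm.tsum_eq]
  simp [trajProb, Equiv.funUnique]

theorem survival_succ (ν : State → ℝ≥0∞) (t : ℕ) :
    survival ν K Opt (t + 1) = ∑' z, if ¬ Opt z then ν z * survival (K z) K Opt t else 0 := by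
  rw [survival, ← (Fin.consEquiv fun _ : Fin (t + 2) => State).tsum_eq, ENNReal.tsum_prod']
  refine tsum_congr fun z => ?_
  by_cases hz : Opt z
  · simp [Fin.forall_fin_succ, hz]
  · simp [Fin.forall_fin_succ, hz, survival, Fin.consEquiv, trajProb_cons, ← ENNReal.tsum_mul_left]

theorem survival_le_mul_pow (S : Set State) (q : ℝ≥0∞)
    (hS : ∀ x ∈ S, ∀ y, K x y ≠ 0 → y ∈ S)
    (hq : ∀ x ∈ S, ∑' y, (if ¬ Opt y then K x y else 0) ≤ q) (t : ℕ) :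
    ∀ ν : State → ℝ≥0∞, (∀ x, ν x ≠ 0 → x ∈ S) →
      survival ν K Opt t ≤ (∑' z, if ¬ Opt z then ν z else 0) * q ^ t := by
  induction t with
  | zero => intro ν _; simp [survival_zero]
  | succ t ih =>
    intro ν hν
    rw [survival_succ, pow_succ', ← ENNReal.tsum_mul_right]
    refine ENNReal.tsum_le_tsum fun z => ?_
    by_cases hz : Opt z
    · simp [hz]
    by_cases hνz : ν z = 0
    · simp [hνz]
    simp only [hz, not_false_eq_true, if_true]
    gcongr
    exact (ih (K z) (hS z (hν z hνz))).trans (by gcongr; exact hq z (hν z hνz))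

theorem expectedOptTime_le_inv (μ0 : State → ℝ≥0∞) (S : Set State) (p : ℝ≥0∞)
    (hμ0 : ∑' x, μ0 x = 1) (hμ0S : ∀ x, μ0 x ≠ 0 → x ∈ S)
    (hS : ∀ x ∈ S, ∀ y, K x y ≠ 0 → y ∈ S)
    (hK : ∀ x ∈ S, ∑' y, K x y ≤ 1)
    (hp : ∀ x ∈ S, p ≤ ∑' y, if Opt y then K x y else 0) :
    expectedOptTime μ0 K Opt ≤ p⁻¹ := by
  obtain ⟨x₀, hx₀⟩ := ENNReal.exists_ne_zero_of_tsum_eq_one hμ0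
  have hp1 : p ≤ 1 :=
    (hp x₀ (hμ0S x₀ hx₀)).trans <| (ENNReal.tsum_le_tsum fun y => by split_ifs <;> simp).trans
      (hK x₀ (hμ0S x₀ hx₀))
  have hstep : ∀ x ∈ S, ∑' y, (if ¬ Opt y then K x y else 0) ≤ 1 - p := by
    intro x hx
    refine ENNReal.le_sub_of_add_le_right (ne_top_of_le_ne_top ENNReal.one_ne_top hp1) ?_
    calc ∑' y, (if ¬ Opt y then K x y else 0) + p
        ≤ ∑' y, (if ¬ Opt y then K x y else 0) + ∑' y, (if Opt y then K x y else 0) := by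
          gcongr; exact hp x hx
      _ = ∑' y, K x y := by
          rw [← ENNReal.tsum_add]; exact tsum_congr fun y => by split_ifs <;> simp
      _ ≤ 1 := hK x hx
  have hmass : ∑' z, (if ¬ Opt z then μ0 z else 0) ≤ 1 :=
    hμ0 ▸ ENNReal.tsum_le_tsum fun z => by split_ifs <;> simp
  calc expectedOptTime μ0 K Opt ≤ ∑' t : ℕ, (1 - p) ^ t :=
        ENNReal.tsum_le_tsum fun t => (survival_le_mul_pow K Opt S _ hS hstep t μ0 hμ0S).trans
          (mul_le_of_le_one_left' hmass)
    _ = p⁻¹ := by rw [ENNReal.tsum_geometric, ENNReal.sub_sub_cancel ENNReal.one_ne_top hp1]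

end MarkovChain

section EvolutionaryAlgorithm

variable {State : Type*} (mutate : State → State → ℝ≥0∞) (cost : State → ℝ≥0∞)

theorem tsum_eaKernel (x : State) : ∑' y, eaKernel mutate cost x y = ∑' y, mutate x y := by
  simp only [eaKernel]
  rw [ENNReal.tsum_add, tsum_ite_eq, ← ENNReal.tsum_add]
  exact tsum_congr fun y => by split_ifs <;> simp

theorem le_eaKernel_of_cost_le {x y : State} (h : cost y ≤ cost x) :
    mutate x y ≤ eaKernel mutate cost x y := by
  rw [eaKernel, if_pos h]
  exact le_self_add

theorem eq_or_mutate_ne_zero_of_eaKernel_ne_zero {x y : State}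
    (h : eaKernel mutate cost x y ≠ 0) : y = x ∨ mutate x y ≠ 0 := by
  by_contra! hxy
  simp [eaKernel, hxy] at h

end EvolutionaryAlgorithm

section ClusterMutation

variable {m : ℕ} {V : Type*} [DecidableEq V] (Vc : Fin m → Finset V)

theorem inv_pow_mul_inv_prod_card_le_clusterMut {x y : Fin m → V} (hy : ∀ i, y i ∈ Vc i) :
    ((m : ℝ≥0∞) ^ m)⁻¹ * (∏ i, ((Vc i).card : ℝ≥0∞))⁻¹ ≤ clusterMut m Vc x y := by
  rw [ENNReal.inv_pow, ENNReal.prod_inv_distrib fun i _ j _ _ => Or.inr (by simp),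
    ← Fin.prod_const, ← prod_mul_distrib, clusterMut]
  gcongr with i
  rw [if_pos (hy i)]
  exact le_self_add

theorem mem_of_clusterMut_ne_zero {x y : Fin m → V} (hx : ∀ i, x i ∈ Vc i)
    (h : clusterMut m Vc x y ≠ 0) (i : Fin m) : y i ∈ Vc i := by
  have hi := prod_ne_zero_iff.1 h i (mem_univ i)
  by_contra hyi
  have hyx : y i ≠ x i := fun hyx => hyi (hyx ▸ hx i)
  simp [hyi, hyx] at hi

theorem sum_clusterMut [Fintype V] {x : Fin m → V} (hx : ∀ i, x i ∈ Vc i) :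
    ∑ y, clusterMut m Vc x y = 1 := by
  simp only [clusterMut]
  rw [← Fintype.prod_sum fun i v => (if v ∈ Vc i then (m : ℝ≥0∞)⁻¹ * ((Vc i).card : ℝ≥0∞)⁻¹
    else 0) + (if v = x i then 1 - (m : ℝ≥0∞)⁻¹ else 0)]
  refine prod_eq_one fun i _ => ?_
  -- `1 - m⁻¹` is truncated in `ℝ≥0∞`; the index `i` itself forces `m ≥ 1`.
  have hm : (1 : ℝ≥0∞) ≤ m := by exact_mod_cast i.pos
  have hcard : ((Vc i).card : ℝ≥0∞) ≠ 0 := by simpa using ne_empty_of_mem (hx i)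
  rw [sum_add_distrib, sum_ite_mem, univ_inter, sum_const, nsmul_eq_mul, mul_left_comm,
    ENNReal.mul_inv_cancel hcard (by simp), mul_one, sum_ite_eq', if_pos (mem_univ _),
    add_tsub_cancel_of_le (ENNReal.inv_le_one.2 hm)]

end ClusterMutation

theorem Real.card_pow_mul_prod_le_sum_pow {ι : Type*} (s : Finset ι) {z : ι → ℝ}
    (hz : ∀ i ∈ s, 0 ≤ z i) : (#s : ℝ) ^ #s * ∏ i ∈ s, z i ≤ (∑ i ∈ s, z i) ^ #s := by
  rcases s.eq_empty_or_nonempty with rfl | hs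
  · simp
  have hk : (#s : ℝ) ≠ 0 := by simpa using hs.ne_empty
  have hmean : (∏ i ∈ s, z i) ^ ((#s : ℕ)⁻¹ : ℝ) ≤ (#s : ℝ)⁻¹ * ∑ i ∈ s, z i := by
    have h := Real.geom_mean_le_arith_mean_weighted s (fun _ => (#s : ℝ)⁻¹) z
      (fun _ _ => by positivity) (by simp [hk]) hz
    rwa [Real.finsetProd_rpow s z hz, ← mul_sum] at h
  calc (#s : ℝ) ^ #s * ∏ i ∈ s, z i
      = (#s : ℝ) ^ #s * ((∏ i ∈ s, z i) ^ ((#s : ℕ)⁻¹ : ℝ)) ^ #s := by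
        rw [Real.rpow_inv_natCast_pow (prod_nonneg hz) hs.card_pos.ne']
    _ ≤ (#s : ℝ) ^ #s * ((#s : ℝ)⁻¹ * ∑ i ∈ s, z i) ^ #s := by
        gcongr
        exact Real.rpow_nonneg (prod_nonneg hz) _
    _ = (∑ i ∈ s, z i) ^ #s := by
        rw [mul_pow, ← mul_assoc, ← mul_pow, mul_inv_cancel₀ hk, one_pow, one_mul]

theorem Nat.card_pow_mul_prod_le_sum_pow {ι : Type*} (s : Finset ι) (z : ι → ℕ) :
    #s ^ #s * ∏ i ∈ s, z i ≤ (∑ i ∈ s, z i) ^ #s := by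
  exact_mod_cast Real.card_pow_mul_prod_le_sum_pow s (z := fun i => (z i : ℝ))
    fun i _ => Nat.cast_nonneg _

theorem sum_card_le_card_of_pairwise_disjoint {ι V : Type*} [Fintype ι] [Fintype V]
    [DecidableEq V] {Vc : ι → Finset V} (h : Pairwise (Disjoint on Vc)) :
    ∑ i, #(Vc i) ≤ Fintype.card V := by
  rw [← card_biUnion fun i _ j _ hij => h hij]
  exact card_le_univ _

theorem inv_pow_le_inv_pow_mul_inv_prod_card {m n : ℕ} {V : Type*} (Vc : Fin m → Finset V)
    (h : ∑ i, #(Vc i) ≤ n) :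
    ((n : ℝ≥0∞) ^ m)⁻¹ ≤ ((m : ℝ≥0∞) ^ m)⁻¹ * (∏ i, ((Vc i).card : ℝ≥0∞))⁻¹ := by
  rw [← ENNReal.mul_inv (Or.inr (ENNReal.prod_ne_top fun _ _ => ENNReal.natCast_ne_top _))
    (Or.inl (by simp)), ENNReal.inv_le_inv]
  have hamgm := Nat.card_pow_mul_prod_le_sum_pow univ fun i => #(Vc i)
  rw [card_univ, Fintype.card_fin] at hamgm
  exact_mod_cast hamgm.trans (Nat.pow_le_pow_left h m)

theorem clusterEA_upper_bound_general (m n : ℕ) {V : Type} [Fintype V] [DecidableEq V]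
    (hn : Fintype.card V = n)
    (Vc : Fin m → Finset V)
    (hdisj : ∀ i j, i ≠ j → Disjoint (Vc i) (Vc j))
    (c : V → V → ℝ≥0∞)
    (Valid : (Fin m → V) → Prop)
    (hValid : ∀ x, Valid x ↔ ∀ i, x i ∈ Vc i)
    (Opt : (Fin m → V) → Prop)
    (hOpt : ∀ x, Opt x ↔ (Valid x ∧ ∀ y, Valid y → mstCost c x ≤ mstCost c y))
    (μ0 : (Fin m → V) → ℝ≥0∞)
    (hμ0 : ∑' x, μ0 x = 1)
    (hsupp : ∀ x, μ0 x ≠ 0 → Valid x) :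
    (∀ x : Fin m → V, Valid x →
        ((m : ℝ≥0∞) ^ m)⁻¹ * (∏ i : Fin m, ((Vc i).card : ℝ≥0∞))⁻¹ ≤
          ∑' y : Fin m → V, if Opt y then clusterMut m Vc x y else 0) ∧
    ((n : ℝ≥0∞) ^ m)⁻¹ ≤ ((m : ℝ≥0∞) ^ m)⁻¹ * (∏ i : Fin m, ((Vc i).card : ℝ≥0∞))⁻¹ ∧
    expectedOptTime μ0 (eaKernel (clusterMut m Vc) (mstCost c)) Opt ≤ (n : ℝ≥0∞) ^ m := by
  set p := ((m : ℝ≥0∞) ^ m)⁻¹ * (∏ i : Fin m, ((Vc i).card : ℝ≥0∞))⁻¹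
  obtain ⟨x₀, hx₀⟩ := ENNReal.exists_ne_zero_of_tsum_eq_one hμ0
  obtain ⟨y, hyValid, hyMin⟩ :=
    Set.exists_min_image {x | Valid x} (mstCost c) (Set.toFinite _) ⟨x₀, hsupp x₀ hx₀⟩
  have hyOpt : Opt y := (hOpt y).2 ⟨hyValid, hyMin⟩
  have hhit (x : Fin m → V) : p ≤ clusterMut m Vc x y :=
    inv_pow_mul_inv_prod_card_le_clusterMut Vc ((hValid y).1 hyValid)
  have hpn : ((n : ℝ≥0∞) ^ m)⁻¹ ≤ p :=
    inv_pow_le_inv_pow_mul_inv_prod_card Vc (hn ▸ sum_card_le_card_of_pairwise_disjoint hdisj)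
  refine ⟨fun x _ => (hhit x).trans ((if_pos hyOpt).symm.trans_le (ENNReal.le_tsum y)), hpn, ?_⟩
  calc expectedOptTime μ0 (eaKernel (clusterMut m Vc) (mstCost c)) Opt ≤ p⁻¹ := by
        refine expectedOptTime_le_inv _ Opt μ0 {x | Valid x} p hμ0 hsupp ?_ ?_ ?_
        · intro x hx z hz
          rcases eq_or_mutate_ne_zero_of_eaKernel_ne_zero _ _ hz with rfl | hmut
          · exact hx
          · exact (hValid z).2 (mem_of_clusterMut_ne_zero Vc ((hValid x).1 hx) hmut)
        · intro x hx
          rw [tsum_eaKernel, tsum_fintype, sum_clusterMut Vc ((hValid x).1 hx)]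
        · intro x hx
          calc p ≤ eaKernel (clusterMut m Vc) (mstCost c) x y :=
                (hhit x).trans (le_eaKernel_of_cost_le _ _ (hyMin x hx))
            _ ≤ _ := (if_pos hyOpt).symm.trans_le (ENNReal.le_tsum y)
    _ ≤ (n : ℝ≥0∞) ^ m := by simpa using ENNReal.inv_le_inv.2 hpn

/-- For any instance of the generalised minimum spanning tree problem with
`n` nodes and `m` clusters `Vc 0, …, Vc (m-1)` (pairwise disjoint, nonempty, covering `V`),
the cluster-based (1+1) EA with the spanned nodes representation satisfies: from any node
selection `x`, the probability that a single mutation step produces a globally optimal node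
selection is at least `m^{-m} * ∏ i, |Vc i|⁻¹`, which is at least `n^{-m}`; consequently,
for any initial distribution `μ0` over node selections, the expected optimization time is
at most `n^m`. -/
theorem clusterEA_upper_bound (m n : ℕ) (hm : 0 < m) {V : Type} [Fintype V] [DecidableEq V]
    (hn : Fintype.card V = n)
    (Vc : Fin m → Finset V)
    (hne : ∀ i, (Vc i).Nonempty)
    (hdisj : ∀ i j, i ≠ j → Disjoint (Vc i) (Vc j))
    (hcover : ∀ v : V, ∃ i, v ∈ Vc i)
    (c : V → V → ℝ≥0∞)
    (hsym : ∀ a b, c a b = c b a)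
    (hpos : ∀ a b, a ≠ b → 0 < c a b)
    (Valid : (Fin m → V) → Prop)
    (hValid : ∀ x, Valid x ↔ ∀ i, x i ∈ Vc i)
    (Opt : (Fin m → V) → Prop)
    (hOpt : ∀ x, Opt x ↔ (Valid x ∧ ∀ y, Valid y → mstCost c x ≤ mstCost c y))
    (μ0 : (Fin m → V) → ℝ≥0∞)
    (hμ0 : ∑' x, μ0 x = 1)
    (hsupp : ∀ x, μ0 x ≠ 0 → Valid x) :
    (∀ x : Fin m → V, Valid x →
        ((m : ℝ≥0∞) ^ m)⁻¹ * (∏ i : Fin m, ((Vc i).card : ℝ≥0∞))⁻¹ ≤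
          ∑' y : Fin m → V, if Opt y then clusterMut m Vc x y else 0) ∧
    ((n : ℝ≥0∞) ^ m)⁻¹ ≤ ((m : ℝ≥0∞) ^ m)⁻¹ * (∏ i : Fin m, ((Vc i).card : ℝ≥0∞))⁻¹ ∧
    expectedOptTime μ0 (eaKernel (clusterMut m Vc) (mstCost c)) Opt ≤ (n : ℝ≥0∞) ^ m :=
  clusterEA_upper_bound_general m n hn Vc hdisj c Valid hValid Opt hOpt μ0 hμ0 hsupp
end
end

section
/- In the instance G_S, for any node selection choosing one node per cluster (one central node and m-1 peripheral nodes), the subgraph of finite-cost edges induced by the selected nodes is a star centered at the chosen central node, and the cost of its minimum spanning tree equals the sum over the m-1 peripheral clusters of the cost of the edge joining the chosen peripheral node to the chosen central node. Consequently: (i) if the chosen central node is suboptimal and exactly k of the peripheral nodes are optimal, the cost is k*n + (m-1-k)*2; (ii) if the chosen central node is optimal and exactly k of the peripheral nodes are optimal, the cost is k + (m-1-k)*n^2; in particular the unique minimum-cost selection consists of all optimal nodes and has cost m-1, and switching a single suboptimal peripheral node to the optimal one while the central node is suboptimal increases the cost by exactly n-2. -/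
open scoped ENNReal BigOperators Classical

noncomputable section

abbrev VS (m : ℕ) := Fin m × Fin m

def VcGS (m : ℕ) : Fin m → Finset (VS m) := fun i => Finset.univ.filter (fun p => p.1 = i)

def ecGS (m : ℕ) (a b : Fin m) : ℝ≥0∞ :=
  if a.val = 0 ∧ b.val = 0 then 1
  else if a.val ≠ 0 ∧ b.val ≠ 0 then 2
  else if a.val ≠ 0 ∧ b.val = 0 then ((m ^ 2 : ℕ) : ℝ≥0∞) ^ 2
  else ((m ^ 2 : ℕ) : ℝ≥0∞)

def cGS (m : ℕ) (p q : VS m) : ℝ≥0∞ :=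
  if p.1.val = 0 ∧ q.1.val ≠ 0 then ecGS m q.2 p.2
  else if q.1.val = 0 ∧ p.1.val ≠ 0 then ecGS m p.2 q.2
  else ⊤

def ValidGS (m : ℕ) (x : Fin m → VS m) : Prop := ∀ i, x i ∈ VcGS m i

/-!
Every finite-cost edge of `G_S` joins a peripheral cluster to the central one, so a spanning
tree of finite cost has no edge between two peripheral clusters; being connected, it then
contains the star around the central cluster, which is therefore a minimum spanning tree. The
cost is thus a sum of `m - 1` spoke costs, each determined by whether its two endpoints are
optimal, and all the numerical claims are counting consequences of this sum.
-/

open Finset SimpleGraph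

lemma SimpleGraph.starGraph_le_of_connected {α : Type*} {r : α} {G : SimpleGraph α}
    (hG : G.Connected) (hr : ∀ i j, G.Adj i j → i = r ∨ j = r) : starGraph r ≤ G := by
  suffices h : ∀ i, i ≠ r → G.Adj i r by
    intro i j hij
    obtain ⟨hne, rfl | rfl⟩ := starGraph_adj.1 hij
    · exact (h j hne.symm).symm
    · exact h i hne
  intro i hi
  obtain ⟨w⟩ := hG.preconnected i r
  cases w with
  | nil => exact absurd rfl hi
  | cons hadj _ => exact (hr _ _ hadj).resolve_left hi ▸ hadj

section MstCost

variable {m : ℕ} {V : Type*} (c : V → V → ℝ≥0∞) (x : Fin m → V)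

def edgeCostSum (G : SimpleGraph (Fin m)) : ℝ≥0∞ :=
  ∑ i, ∑ j, if G.Adj i j then c (x i) (x j) else 0

lemma mstCost_eq_iInf_edgeCostSum :
    mstCost c x = ⨅ (G : SimpleGraph (Fin m)) (_ : G.IsTree), edgeCostSum c x G / 2 := rfl

variable {c x}

lemma edgeCostSum_mono {G H : SimpleGraph (Fin m)} (hGH : G ≤ H) :
    edgeCostSum c x G ≤ edgeCostSum c x H := by
  refine sum_le_sum fun i _ => sum_le_sum fun j _ => ?_
  by_cases hG : G.Adj i j
  · simp [hG, hGH hG]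
  · simp [hG]

lemma edgeCostSum_eq_top {G : SimpleGraph (Fin m)} {i j : Fin m} (hij : G.Adj i j)
    (htop : c (x i) (x j) = ⊤) : edgeCostSum c x G = ⊤ := by
  refine top_le_iff.1 (le_trans ?_ (single_le_sum (fun _ _ => zero_le) (mem_univ i)))
  refine le_trans ?_ (single_le_sum (fun _ _ => zero_le) (mem_univ j))
  simp [hij, htop]

lemma edgeCostSum_starGraph (r : Fin m) (hsymm : ∀ i j, c (x i) (x j) = c (x j) (x i)) :
    edgeCostSum c x (starGraph r) = 2 * ∑ i ∈ univ.erase r, c (x i) (x r) := by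
  rw [edgeCostSum, ← add_sum_erase _ _ (mem_univ r), two_mul]
  congr 1
  · rw [← add_sum_erase _ _ (mem_univ r)]
    simp only [starGraph_adj, ne_eq, not_true_eq_false, false_and, if_false, zero_add]
    exact sum_congr rfl fun j hj => by simp [(ne_of_mem_erase hj).symm, hsymm r j]
  · refine sum_congr rfl fun i hi => ?_
    have hir := ne_of_mem_erase hi
    rw [Fintype.sum_eq_single r fun j hj => by simp [hj, hir]]
    simp [hir]

theorem mstCost_eq_sum_of_star (r : Fin m) (hsymm : ∀ i j, c (x i) (x j) = c (x j) (x i))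
    (htop : ∀ i j, i ≠ r → j ≠ r → i ≠ j → c (x i) (x j) = ⊤) :
    mstCost c x = ∑ i ∈ univ.erase r, c (x i) (x r) := by
  have hstar : edgeCostSum c x (starGraph r) / 2 = ∑ i ∈ univ.erase r, c (x i) (x r) := by
    rw [edgeCostSum_starGraph r hsymm, mul_div_assoc,
      ENNReal.mul_div_cancel two_ne_zero ENNReal.ofNat_ne_top]
  rw [mstCost_eq_iInf_edgeCostSum, ← hstar]
  refine le_antisymm (iInf₂_le _ (isTree_starGraph r)) (le_iInf₂ fun G hG => ?_)
  -- A tree either uses an infinite edge avoiding `r`, or is connected through `r` only and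
  -- hence contains every edge of the star.
  by_cases hcentral : ∀ i j, G.Adj i j → i = r ∨ j = r
  · exact ENNReal.div_le_div_right
      (edgeCostSum_mono (starGraph_le_of_connected hG.connected hcentral)) 2
  · push Not at hcentral
    obtain ⟨i, j, hij, hi, hj⟩ := hcentral
    rw [edgeCostSum_eq_top hij (htop i j hi hj hij.ne),
      ENNReal.top_div_of_ne_top ENNReal.ofNat_ne_top]
    exact le_top

end MstCost

section GS

variable {m : ℕ}

lemma ValidGS.fst_eq {x : Fin m → VS m} (hx : ValidGS m x) (i : Fin m) : (x i).1 = i := by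
  simpa [VcGS] using hx i

lemma cGS_comm (p q : VS m) : cGS m p q = cGS m q p := by
  unfold cGS
  split_ifs <;> first | rfl | tauto

lemma ecGS_ne_top (a b : Fin m) : ecGS m a b ≠ ⊤ := by
  unfold ecGS
  split_ifs <;> simp

lemma cGS_ne_top_iff {p q : VS m} (hpq : p.1 ≠ q.1) :
    cGS m p q ≠ ⊤ ↔ p.1.val = 0 ∨ q.1.val = 0 := by
  have hval : ¬(p.1.val = 0 ∧ q.1.val = 0) := fun h => hpq (Fin.ext (h.1.trans h.2.symm))
  unfold cGS
  split_ifs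
  · exact iff_of_true (ecGS_ne_top _ _) (by tauto)
  · exact iff_of_true (ecGS_ne_top _ _) (by tauto)
  · exact iff_of_false (not_not.2 rfl) (by tauto)

lemma cGS_of_fst_ne_zero_of_fst_eq_zero {p q : VS m} (hp : p.1.val ≠ 0) (hq : q.1.val = 0) :
    cGS m p q = ecGS m p.2 q.2 := by
  simp [cGS, hp, hq]

lemma ecGS_of_val_ne_zero {b : Fin m} (a : Fin m) (hb : b.val ≠ 0) :
    ecGS m a b = if a.val = 0 then ((m ^ 2 : ℕ) : ℝ≥0∞) else 2 := by
  unfold ecGS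
  split_ifs <;> first | rfl | tauto

lemma ecGS_of_val_eq_zero {b : Fin m} (a : Fin m) (hb : b.val = 0) :
    ecGS m a b = if a.val = 0 then 1 else ((m ^ 2 : ℕ) : ℝ≥0∞) ^ 2 := by
  unfold ecGS
  split_ifs <;> first | rfl | tauto

lemma filter_val_ne_zero_eq_erase {c0 : Fin m} (hc0 : c0.val = 0) :
    univ.filter (fun i : Fin m => i.val ≠ 0) = univ.erase c0 := by
  ext i
  simp [Fin.ext_iff, hc0]

lemma card_filter_val_ne_zero {c0 : Fin m} (hc0 : c0.val = 0) :
    (univ.filter fun i : Fin m => i.val ≠ 0).card = m - 1 := by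
  simp [filter_val_ne_zero_eq_erase hc0]

theorem mstCost_cGS {c0 : Fin m} (hc0 : c0.val = 0) {x : Fin m → VS m} (hx : ValidGS m x) :
    mstCost (cGS m) x =
      ∑ i ∈ univ.filter (fun i : Fin m => i.val ≠ 0), cGS m (x i) (x c0) := by
  rw [filter_val_ne_zero_eq_erase hc0]
  refine mstCost_eq_sum_of_star c0 (fun i j => cGS_comm _ _) fun i j hi hj hij => ?_
  have hfinite := cGS_ne_top_iff (p := x i) (q := x j) (by rwa [hx.fst_eq, hx.fst_eq])
  rw [hx.fst_eq, hx.fst_eq] at hfinite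
  by_contra htop
  rcases hfinite.1 htop with h | h
  · exact hi (Fin.ext (h.trans hc0.symm))
  · exact hj (Fin.ext (h.trans hc0.symm))

def numOptPeripheral (x : Fin m → VS m) : ℕ :=
  (univ.filter fun i : Fin m => i.val ≠ 0 ∧ (x i).2.val = 0).card

lemma mstCost_cGS_eq_of_ite {c0 : Fin m} (hc0 : c0.val = 0) {x : Fin m → VS m}
    (hx : ValidGS m x) {a b : ℝ≥0∞}
    (hab : ∀ i : Fin m, i.val ≠ 0 → cGS m (x i) (x c0) = if (x i).2.val = 0 then a else b) :
    mstCost (cGS m) x =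
      numOptPeripheral x * a + ((m - 1 - numOptPeripheral x : ℕ) : ℝ≥0∞) * b := by
  have hcard := card_filter_add_card_filter_not
    (s := univ.filter fun i : Fin m => i.val ≠ 0) (fun i => (x i).2.val = 0)
  simp only [card_filter_val_ne_zero hc0, filter_filter] at hcard
  unfold numOptPeripheral
  rw [mstCost_cGS hc0 hx, sum_congr rfl fun i hi => hab i (mem_filter.1 hi).2, sum_ite,
    sum_const, sum_const, nsmul_eq_mul, nsmul_eq_mul, filter_filter, filter_filter, ← hcard,
    Nat.add_sub_cancel_left]

theorem mstCost_of_center_suboptimal {c0 : Fin m} (hc0 : c0.val = 0) {x : Fin m → VS m}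
    (hx : ValidGS m x) (hcen : (x c0).2.val ≠ 0) :
    mstCost (cGS m) x =
      numOptPeripheral x * ((m ^ 2 : ℕ) : ℝ≥0∞) +
        ((m - 1 - numOptPeripheral x : ℕ) : ℝ≥0∞) * 2 :=
  mstCost_cGS_eq_of_ite hc0 hx fun i hi => by
    rw [cGS_of_fst_ne_zero_of_fst_eq_zero (by rwa [hx.fst_eq]) (by rwa [hx.fst_eq]),
      ecGS_of_val_ne_zero _ hcen]

theorem mstCost_of_center_optimal {c0 : Fin m} (hc0 : c0.val = 0) {x : Fin m → VS m}
    (hx : ValidGS m x) (hcen : (x c0).2.val = 0) :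
    mstCost (cGS m) x =
      numOptPeripheral x +
        ((m - 1 - numOptPeripheral x : ℕ) : ℝ≥0∞) * ((m ^ 2 : ℕ) : ℝ≥0∞) ^ 2 := by
  rw [mstCost_cGS_eq_of_ite hc0 hx fun i hi => by
    rw [cGS_of_fst_ne_zero_of_fst_eq_zero (by rwa [hx.fst_eq]) (by rwa [hx.fst_eq]),
      ecGS_of_val_eq_zero _ hcen], mul_one]

lemma numOptPeripheral_lt {c0 : Fin m} (hc0 : c0.val = 0) {x : Fin m → VS m} {j : Fin m}
    (hj : j.val ≠ 0) (hxj : (x j).2.val ≠ 0) : numOptPeripheral x < m - 1 := by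
  rw [← card_filter_val_ne_zero hc0]
  refine card_lt_card ((ssubset_iff_of_subset fun i hi => ?_).2 ⟨j, ?_, ?_⟩)
  · exact mem_filter.2 ⟨mem_univ i, (mem_filter.1 hi).2.1⟩
  · simp [hj]
  · simp [hxj]

theorem mstCost_allOptimal {c0 : Fin m} (hc0 : c0.val = 0) :
    mstCost (cGS m) (fun i => (i, c0)) = ((m - 1 : ℕ) : ℝ≥0∞) := by
  have hvalid : ValidGS m fun i => (i, c0) := fun i => by simp [VcGS]
  have hall : numOptPeripheral (fun i => ((i, c0) : VS m)) = m - 1 := by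
    simp only [numOptPeripheral, hc0, and_true]
    exact card_filter_val_ne_zero hc0
  rw [mstCost_of_center_optimal hc0 hvalid hc0, hall]
  simp

theorem mstCost_allOptimal_lt {c0 : Fin m} (hc0 : c0.val = 0) {y : Fin m → VS m}
    (hy : ValidGS m y) (hne : y ≠ fun i => (i, c0)) :
    mstCost (cGS m) (fun i => (i, c0)) < mstCost (cGS m) y := by
  obtain ⟨j, hj⟩ : ∃ j, (y j).2.val ≠ 0 := by
    by_contra! h
    exact hne (funext fun i => Prod.ext (hy.fst_eq i) (Fin.ext ((h i).trans hc0.symm)))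
  rw [mstCost_allOptimal hc0]
  set K := numOptPeripheral y
  by_cases hcen : (y c0).2.val = 0
  · have hjc : j.val ≠ 0 := fun h => hj (by rwa [show j = c0 from Fin.ext (h.trans hc0.symm)])
    have hK := numOptPeripheral_lt hc0 hjc hj
    rw [mstCost_of_center_optimal hc0 hy hcen]
    have hlt : m - 1 < K + (m - 1 - K) * (m ^ 2) ^ 2 :=
      calc m - 1 < m := by omega
        _ ≤ (m ^ 2) ^ 2 := by rw [← pow_mul]; exact Nat.le_self_pow (by norm_num) m
        _ ≤ (m - 1 - K) * (m ^ 2) ^ 2 := Nat.le_mul_of_pos_left _ (by omega)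
        _ ≤ K + (m - 1 - K) * (m ^ 2) ^ 2 := Nat.le_add_left _ _
    exact_mod_cast hlt
  · have hm : 2 ≤ m := by have := (y c0).2.isLt; omega
    rw [mstCost_of_center_suboptimal hc0 hy hcen]
    have hlt : m - 1 < K * m ^ 2 + (m - 1 - K) * 2 := by
      rcases Nat.eq_zero_or_pos K with hK0 | hKpos
      · rw [hK0]; omega
      · calc m - 1 < m := by omega
          _ ≤ m ^ 2 := Nat.le_self_pow two_ne_zero m
          _ ≤ K * m ^ 2 := Nat.le_mul_of_pos_left _ hKpos
          _ ≤ K * m ^ 2 + (m - 1 - K) * 2 := Nat.le_add_right _ _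
    exact_mod_cast hlt

theorem mstCost_update_optimal {c0 : Fin m} (hc0 : c0.val = 0) {x : Fin m → VS m}
    (hx : ValidGS m x) (hcen : (x c0).2.val ≠ 0) {j : Fin m} (hj : j.val ≠ 0)
    (hxj : (x j).2.val ≠ 0) :
    mstCost (cGS m) (Function.update x j (j, c0)) =
      mstCost (cGS m) x + (((m ^ 2 : ℕ) : ℝ≥0∞) - 2) := by
  have hjc : c0 ≠ j := fun h => hj (h ▸ hc0)
  have hvalid : ValidGS m (Function.update x j (j, c0)) := by
    intro i
    rcases eq_or_ne i j with rfl | hij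
    · simp [VcGS]
    · simpa [hij] using hx i
  have hcount : numOptPeripheral (Function.update x j (j, c0)) = numOptPeripheral x + 1 := by
    have hnotin : j ∉ univ.filter fun i : Fin m => i.val ≠ 0 ∧ (x i).2.val = 0 := by
      simp [hxj]
    unfold numOptPeripheral
    rw [← card_insert_of_notMem hnotin]
    congr 1
    ext i
    rcases eq_or_ne i j with rfl | hij
    · simp [hj, hc0]
    · simp [hij]
  have hK := numOptPeripheral_lt hc0 hj hxj
  have hm : 2 ≤ m := by have := j.isLt; omega
  rw [mstCost_of_center_suboptimal hc0 hvalid (by rwa [Function.update_of_ne hjc]),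
    mstCost_of_center_suboptimal hc0 hx hcen, hcount,
    show ((m ^ 2 : ℕ) : ℝ≥0∞) - 2 = ((m ^ 2 - 2 : ℕ) : ℝ≥0∞) by
      simp [ENNReal.natCast_sub]]
  set K := numOptPeripheral x
  obtain ⟨d, hd⟩ := Nat.exists_eq_add_of_lt hK
  obtain ⟨n, hn⟩ := Nat.exists_eq_add_of_le (show 2 ≤ m ^ 2 by nlinarith)
  have hnat : (K + 1) * m ^ 2 + (m - 1 - (K + 1)) * 2 =
      K * m ^ 2 + (m - 1 - K) * 2 + (m ^ 2 - 2) := by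
    rw [hd, hn, show K + d + 1 - (K + 1) = d by omega, show K + d + 1 - K = d + 1 by omega,
      Nat.add_sub_cancel_left]
    ring
  exact_mod_cast hnat

end GS

theorem GS_mst_structure_general (m : ℕ) (c0 : Fin m) (hc0 : c0.val = 0) :
    (∀ x : Fin m → VS m, ValidGS m x →
      (∀ i j : Fin m, i ≠ j → (cGS m (x i) (x j) ≠ ⊤ ↔ (i.val = 0 ∨ j.val = 0))) ∧
      mstCost (cGS m) x =
        ∑ i ∈ Finset.univ.filter (fun i : Fin m => i.val ≠ 0), cGS m (x i) (x c0) ∧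
      ((x c0).2.val ≠ 0 →
        mstCost (cGS m) x =
          ((Finset.univ.filter
              (fun i : Fin m => i.val ≠ 0 ∧ (x i).2.val = 0)).card : ℝ≥0∞) *
              ((m ^ 2 : ℕ) : ℝ≥0∞) +
            ((m - 1 - (Finset.univ.filter
              (fun i : Fin m => i.val ≠ 0 ∧ (x i).2.val = 0)).card : ℕ) : ℝ≥0∞) * 2) ∧
      ((x c0).2.val = 0 →
        mstCost (cGS m) x =
          ((Finset.univ.filter
              (fun i : Fin m => i.val ≠ 0 ∧ (x i).2.val = 0)).card : ℝ≥0∞) +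
            ((m - 1 - (Finset.univ.filter
              (fun i : Fin m => i.val ≠ 0 ∧ (x i).2.val = 0)).card : ℕ) : ℝ≥0∞) *
              ((m ^ 2 : ℕ) : ℝ≥0∞) ^ 2)) ∧
    (mstCost (cGS m) (fun i => (i, c0)) = ((m - 1 : ℕ) : ℝ≥0∞) ∧
      ∀ y : Fin m → VS m, ValidGS m y → y ≠ (fun i => (i, c0)) →
        mstCost (cGS m) (fun i => (i, c0)) < mstCost (cGS m) y) ∧
    (∀ x : Fin m → VS m, ValidGS m x → (x c0).2.val ≠ 0 →
      ∀ j : Fin m, j.val ≠ 0 → (x j).2.val ≠ 0 →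
        mstCost (cGS m) (Function.update x j (j, c0)) =
          mstCost (cGS m) x + (((m ^ 2 : ℕ) : ℝ≥0∞) - 2)) := by
  refine ⟨fun x hx => ⟨fun i j hij => ?_, mstCost_cGS hc0 hx,
      mstCost_of_center_suboptimal hc0 hx, mstCost_of_center_optimal hc0 hx⟩,
    ⟨mstCost_allOptimal hc0, fun y hy hne => mstCost_allOptimal_lt hc0 hy hne⟩,
    fun x hx hcen j hj hxj => mstCost_update_optimal hc0 hx hcen hj hxj⟩
  simpa only [hx.fst_eq] using
    cGS_ne_top_iff (p := x i) (q := x j) (by rwa [hx.fst_eq, hx.fst_eq])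

/-- In the instance `G_S` (with `n = m^2` nodes, central cluster `c0` of index
`0` and peripheral clusters of nonzero index, the node of index `0` in each cluster being
its optimal node), for any valid node selection `x`:
* the subgraph of finite-cost edges induced by the selected nodes is a star centred at the
  chosen central node;
* the cost of its minimum spanning tree equals the sum over the `m-1` peripheral clusters
  of the cost of the edge joining the chosen peripheral node to the chosen central node;
* (i) if the chosen central node is suboptimal and exactly `k` of the chosen peripheral
  nodes are optimal, this cost is `k*n + (m-1-k)*2`;
* (ii) if the chosen central node is optimal and exactly `k` of the chosen peripheral nodes
  are optimal, this cost is `k + (m-1-k)*n^2`;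
* the unique minimum-cost selection consists of all optimal nodes and has cost `m-1`;
* switching a single suboptimal peripheral node to the optimal one while the central node
  is suboptimal increases the cost by exactly `n - 2`. -/
theorem GS_mst_structure (m : ℕ) (hm : 2 ≤ m) (c0 : Fin m) (hc0 : c0.val = 0) :
    (∀ x : Fin m → VS m, ValidGS m x →
      (∀ i j : Fin m, i ≠ j → (cGS m (x i) (x j) ≠ ⊤ ↔ (i.val = 0 ∨ j.val = 0))) ∧
      mstCost (cGS m) x =
        ∑ i ∈ Finset.univ.filter (fun i : Fin m => i.val ≠ 0), cGS m (x i) (x c0) ∧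
      ((x c0).2.val ≠ 0 →
        mstCost (cGS m) x =
          ((Finset.univ.filter
              (fun i : Fin m => i.val ≠ 0 ∧ (x i).2.val = 0)).card : ℝ≥0∞) *
              ((m ^ 2 : ℕ) : ℝ≥0∞) +
            ((m - 1 - (Finset.univ.filter
              (fun i : Fin m => i.val ≠ 0 ∧ (x i).2.val = 0)).card : ℕ) : ℝ≥0∞) * 2) ∧
      ((x c0).2.val = 0 →
        mstCost (cGS m) x =
          ((Finset.univ.filter
              (fun i : Fin m => i.val ≠ 0 ∧ (x i).2.val = 0)).card : ℝ≥0∞) +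
            ((m - 1 - (Finset.univ.filter
              (fun i : Fin m => i.val ≠ 0 ∧ (x i).2.val = 0)).card : ℕ) : ℝ≥0∞) *
              ((m ^ 2 : ℕ) : ℝ≥0∞) ^ 2)) ∧
    (mstCost (cGS m) (fun i => (i, c0)) = ((m - 1 : ℕ) : ℝ≥0∞) ∧
      ∀ y : Fin m → VS m, ValidGS m y → y ≠ (fun i => (i, c0)) →
        mstCost (cGS m) (fun i => (i, c0)) < mstCost (cGS m) y) ∧
    (∀ x : Fin m → VS m, ValidGS m x → (x c0).2.val ≠ 0 →
      ∀ j : Fin m, j.val ≠ 0 → (x j).2.val ≠ 0 →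
        mstCost (cGS m) (Function.update x j (j, c0)) =
          mstCost (cGS m) x + (((m ^ 2 : ℕ) : ℝ≥0∞) - 2)) :=
  GS_mst_structure_general m c0 hc0
end
end

section
/- For a permutation pi of {0,1,...,m-1}, viewed as a cyclic sequence, let S(pi) = |{ i in {0,...,m-1} : pi_{(i+1) mod m} = (pi_i + 1) mod m }|. If pi' is obtained from pi by a single jump operation, then a jump changes at most 3 of the cyclically adjacent pairs of the sequence, and hence |S(pi') - S(pi)| <= 3. Consequently, transforming a permutation pi with S(pi) <= epsilon*m into a permutation pi* with S(pi*) = m requires at least (1-epsilon)*m/3 jump operations. -/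
open scoped Classical

/-- The cyclic successor of a position/label `i` in `Fin m`: `(i + 1) mod m`. -/
def cyc {m : ℕ} (i : Fin m) : Fin m :=
  ⟨(i.val + 1) % m, Nat.mod_lt _ (Nat.lt_of_le_of_lt (Nat.zero_le i.val) i.isLt)⟩

/-- The jump operation on a list: the element at position `j` is removed and reinserted at
position `k` (shifting the intermediate elements accordingly). -/
def jumpList {α : Type*} (l : List α) (j k : ℕ) : List α :=
  match l[j]? with
  | none => l
  | some a => (l.eraseIdx j).insertIdx k a

/-- The jump operation on a permutation `π` of `Fin m`, viewed as the cyclic sequence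
`π 0, …, π (m-1)`: the element at position `j` is removed and reinserted at position `k`. -/
def jumpFun {m : ℕ} (π : Fin m → Fin m) (j k : Fin m) : Fin m → Fin m :=
  fun i => (jumpList (List.ofFn π) j.val k.val).getD i.val (π i)

/-- For a permutation `π` of `{0, …, m-1}`, viewed as a cyclic sequence,
`S π = |{i : π ((i+1) mod m) = (π i + 1) mod m}|`. -/
noncomputable def Scount {m : ℕ} (π : Fin m → Fin m) : ℕ :=
  (Finset.univ.filter (fun i : Fin m => π (cyc i) = cyc (π i))).card

/-- The cyclically adjacent pairs of the sequence `π 0, …, π (m-1)`. -/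
noncomputable def adjPairs {m : ℕ} (π : Fin m → Fin m) : Finset (Fin m × Fin m) :=
  Finset.univ.image (fun i : Fin m => (π i, π (cyc i)))

/-! After a jump the sequence is `π ∘ τ` for a permutation `τ` of the positions, and `τ`
commutes with the cyclic successor at every position except three: the one just before the
insertion point `k`, `k` itself, and the removal point `j` (or the one just before it when
`j < k`). Away from these three positions the adjacent pair of `π ∘ τ` at `w` is the adjacent
pair of `π` at `τ w`, so a jump loses or creates at most three adjacent pairs, and changes the
number of successor matches `S` by at most three. Reaching `S = m` from `S π ≤ ε m` thus takes
at least `(1 - ε) m / 3` jumps. -/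

open Finset

section Transfer

variable {α β : Type*} {f g : α → β} {τ : α → α} {D : Finset α}

lemma card_image_sdiff_image_le [Fintype α] [DecidableEq β] (h : ∀ w ∉ D, g w = f (τ w)) :
    #(univ.image g \ univ.image f) ≤ #D := by
  calc #(univ.image g \ univ.image f) ≤ #(D.image g) := by
        refine card_le_card fun b hb => ?_
        simp only [mem_sdiff, mem_image, mem_univ, true_and] at hb
        obtain ⟨⟨w, rfl⟩, hgw⟩ := hb
        by_cases hw : w ∈ D
        · exact mem_image_of_mem g hw
        · exact (hgw ⟨τ w, (h w hw).symm⟩).elim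
    _ ≤ #D := card_image_le

lemma card_filter_le_card_filter_add [Fintype α] (hτ : τ.Injective)
    (h : ∀ w ∉ D, g w = f (τ w)) (P : β → Prop) [DecidablePred P] :
    #{w | P (g w)} ≤ #{v | P (f v)} + #D := by
  calc #{w | P (g w)} ≤ #(({w | P (g w)} : Finset α) \ D) + #D := card_le_card_sdiff_add_card
    _ ≤ #{v | P (f v)} + #D := by
        refine Nat.add_le_add_right (card_le_card_of_injOn τ (fun w hw => ?_) hτ.injOn) _
        simp only [coe_sdiff, Set.mem_sdiff, mem_coe, mem_filter, mem_univ, true_and] at hw ⊢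
        exact h w hw.2 ▸ hw.1

lemma eq_comp_symm_of_notMem_map {σ : Equiv.Perm α} (h : ∀ w ∉ D, g w = f (σ w)) :
    ∀ v ∉ D.map σ.toEmbedding, f v = g (σ.symm v) := by
  intro v hv
  rw [mem_map_equiv] at hv
  rw [h _ hv, σ.apply_symm_apply]

end Transfer

def jumpIndex (j k i : ℕ) : ℕ :=
  if k ≤ j then (if i < k then i else if i = k then j else if i ≤ j then i - 1 else i)
  else (if i < j then i else if i < k then i + 1 else if i = k then j else i)

lemma jumpIndex_lt {m j k i : ℕ} (hj : j < m) (hk : k < m) (hi : i < m) :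
    jumpIndex j k i < m := by
  unfold jumpIndex; split_ifs <;> omega

lemma jumpIndex_jumpIndex (j k i : ℕ) : jumpIndex k j (jumpIndex j k i) = i := by
  unfold jumpIndex; split_ifs <;> omega

section Jump

variable {m : ℕ}

def jumpPos (j k : Fin m) : Equiv.Perm (Fin m) where
  toFun i := ⟨jumpIndex j k i, jumpIndex_lt j.isLt k.isLt i.isLt⟩
  invFun i := ⟨jumpIndex k j i, jumpIndex_lt k.isLt j.isLt i.isLt⟩
  left_inv i := Fin.ext (jumpIndex_jumpIndex j k i)
  right_inv i := Fin.ext (jumpIndex_jumpIndex k j i)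

lemma val_jumpPos (j k i : Fin m) : (jumpPos j k i : ℕ) = jumpIndex j k i := rfl

lemma jumpFun_eq_comp (π : Fin m → Fin m) (j k : Fin m) :
    jumpFun π j k = π ∘ jumpPos j k := by
  funext i
  have := j.isLt
  have := k.isLt
  have := i.isLt
  have hπj : (List.ofFn π)[j.val]? = some (π j) := by simp
  simp only [jumpFun, jumpList, hπj]
  rw [List.getD_eq_getElem _ _ (by
      simp only [List.length_insertIdx, List.length_eraseIdx, List.length_ofFn]
      split_ifs <;> omega),
    List.getElem_insertIdx]
  simp only [List.getElem_eraseIdx, List.getElem_ofFn, Function.comp_apply]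
  split_ifs <;> congr 1 <;> ext <;> simp only [val_jumpPos, jumpIndex] <;> split_ifs <;> omega

lemma val_cyc (i : Fin m) : (cyc i : ℕ) = if (i : ℕ) + 1 = m then (0 : ℕ) else i + 1 := by
  simp only [cyc]
  split_ifs with h
  · simp [h]
  · exact Nat.mod_eq_of_lt (by omega)

lemma cyc_eq_finRotate : (cyc : Fin m → Fin m) = finRotate m := by
  funext i
  cases m with
  | zero => exact i.elim0
  | succ n =>
    ext
    rw [val_cyc, coe_finRotate]
    simp [Fin.ext_iff]

def jumpDefects (j k : Fin m) : Finset (Fin m) :=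
  {(finRotate m).symm k, k, if k ≤ j then j else (finRotate m).symm j}

lemma card_jumpDefects_le (j k : Fin m) : #(jumpDefects j k) ≤ 3 := card_le_three

lemma jumpPos_cyc {j k w : Fin m} (hw : w ∉ jumpDefects j k) :
    jumpPos j k (cyc w) = cyc (jumpPos j k w) := by
  have := w.isLt
  have := j.isLt
  have := k.isLt
  ext
  simp only [val_jumpPos, val_cyc, jumpIndex]
  by_cases hkj : k ≤ j <;>
  · simp only [jumpDefects, hkj, if_true, if_false, mem_insert, mem_singleton, not_or,
      Equiv.eq_symm_apply, ← cyc_eq_finRotate, Fin.ext_iff, val_cyc] at hw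
    rw [Fin.le_iff_val_le_val] at hkj
    split_ifs at * <;> omega

def adjPair (π : Fin m → Fin m) (i : Fin m) : Fin m × Fin m := (π i, π (cyc i))

lemma adjPair_comp_jumpPos (π : Fin m → Fin m) {j k w : Fin m} (hw : w ∉ jumpDefects j k) :
    adjPair (π ∘ jumpPos j k) w = adjPair π (jumpPos j k w) := by
  rw [adjPair, adjPair, Function.comp_apply, Function.comp_apply, jumpPos_cyc hw]

variable (π : Fin m → Fin m) (j k : Fin m)

lemma card_adjPairs_jump_sdiff_le : #(adjPairs (jumpFun π j k) \ adjPairs π) ≤ 3 := by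
  rw [jumpFun_eq_comp]
  exact (card_image_sdiff_image_le fun w => adjPair_comp_jumpPos π).trans
    (card_jumpDefects_le j k)

lemma card_adjPairs_sdiff_jump_le : #(adjPairs π \ adjPairs (jumpFun π j k)) ≤ 3 := by
  rw [jumpFun_eq_comp]
  calc _ ≤ #((jumpDefects j k).map (jumpPos j k).toEmbedding) :=
        card_image_sdiff_image_le (eq_comp_symm_of_notMem_map fun w => adjPair_comp_jumpPos π)
    _ ≤ 3 := (card_map _).trans_le (card_jumpDefects_le j k)

lemma Scount_jump_le : Scount (jumpFun π j k) ≤ Scount π + 3 := by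
  rw [jumpFun_eq_comp]
  calc _ ≤ Scount π + #(jumpDefects j k) :=
        card_filter_le_card_filter_add (jumpPos j k).injective
          (fun w => adjPair_comp_jumpPos π) (fun p : Fin m × Fin m => p.2 = cyc p.1)
    _ ≤ Scount π + 3 := Nat.add_le_add_left (card_jumpDefects_le j k) _

lemma Scount_le_Scount_jump : Scount π ≤ Scount (jumpFun π j k) + 3 := by
  rw [jumpFun_eq_comp]
  calc _ ≤ Scount (π ∘ jumpPos j k) + #((jumpDefects j k).map (jumpPos j k).toEmbedding) :=
        card_filter_le_card_filter_add (jumpPos j k).symm.injective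
          (eq_comp_symm_of_notMem_map fun w => adjPair_comp_jumpPos π)
          (fun p : Fin m × Fin m => p.2 = cyc p.1)
    _ ≤ Scount (π ∘ jumpPos j k) + 3 := by
        rw [card_map]
        exact Nat.add_le_add_left (card_jumpDefects_le j k) _

lemma Scount_foldl_jump_le (js : List (Fin m × Fin m)) :
    Scount (js.foldl (fun f p => jumpFun f p.1 p.2) π) ≤ Scount π + 3 * js.length := by
  induction js generalizing π with
  | nil => simp
  | cons p js ih =>
    have := Scount_jump_le π p.1 p.2
    have := ih (jumpFun π p.1 p.2)
    simp only [List.foldl_cons, List.length_cons]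
    omega

end Jump

/-- A single jump operation changes at most `3` of the cyclically adjacent
pairs of the sequence, and hence `|S π' - S π| ≤ 3` whenever `π'` is obtained from `π` by a
single jump; consequently, transforming a permutation `π` with `S π ≤ ε·m` into a
permutation `π*` with `S π* = m` requires at least `(1-ε)·m/3` jump operations. -/
theorem jump_changes_at_most_three (m : ℕ) :
    (∀ π : Fin m → Fin m, Function.Bijective π → ∀ j k : Fin m,
      (adjPairs π \ adjPairs (jumpFun π j k)).card ≤ 3 ∧
      (adjPairs (jumpFun π j k) \ adjPairs π).card ≤ 3 ∧
      |(Scount (jumpFun π j k) : ℤ) - (Scount π : ℤ)| ≤ 3) ∧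
    (∀ (ε : ℝ) (π : Fin m → Fin m), Function.Bijective π →
      (Scount π : ℝ) ≤ ε * m →
      ∀ js : List (Fin m × Fin m),
        Scount (js.foldl (fun f p => jumpFun f p.1 p.2) π) = m →
        (1 - ε) * m / 3 ≤ (js.length : ℝ)) := by
  refine ⟨fun π _ j k => ⟨card_adjPairs_sdiff_jump_le π j k, card_adjPairs_jump_sdiff_le π j k,
    abs_sub_le_iff.mpr ⟨?_, ?_⟩⟩, fun ε π _ hS js hjs => ?_⟩
  · have := Scount_jump_le π j k
    omega
  · have := Scount_le_Scount_jump π j k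
    omega
  · have hm : (m : ℝ) ≤ Scount π + 3 * js.length := by
      exact_mod_cast hjs ▸ Scount_foldl_jump_le π js
    linarith
end
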